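/- Let α > 0, β > 1 and γ > 0 satisfy 1 < γ·(β−1) < β+1. Then the kinetic system admits no nonconstant periodic solution with positive components: there is no nonconstant pair of differentiable periodic functions (U,V) : ℝ → ℝ² solving the kinetic system on ℝ with U(t) > 0 and V(t) > 0 for all t ∈ ℝ. -/

import Mathlib

/-!
Write `b = β - 1`, `u* = 1/b`, `θ = 2α/b²`, `φ(u) = b u - log u` and `N` for the prey nullcline.
Along a positive solution, `L(u, v) = v^θ ((θ+1)(φ(u) - φ(u*)) + v - (θ+1) N(u*) / θ)` satisfies
`dL/dt = (θ+1) b v^θ (u - u*) w(u) / (1+u)` with `w(u) = θ (φ(u) - φ(u*)) + N(u) - N(u*)`: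
the `v`-dependence cancels, and the constant term is what makes the rate factor through `w`.
When `γ b < β + 1` the function `w` is strictly decreasing, so `dL/dt ≤ 0` with equality only on
the line `u = u*`. A nonincreasing periodic function is constant, hence a periodic orbit stays on
`u = u*`, where `U' = 0` pins `V` to the nullcline: the orbit is a single point.
-/

open Real Set Function

theorem Antitone.eq_of_periodic {β : Type*} [PartialOrder β] {f : ℝ → β} {T : ℝ}
    (hf : Antitone f) (hp : Periodic f T) (hT : 0 < T) (x y : ℝ) : f x = f y := by
  have key : ∀ a b : ℝ, a ≤ b → f a = f b := by
    intro a b hab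
    obtain ⟨n, hn⟩ := exists_nat_ge ((b - a) / T)
    have hb : b ≤ a + n * T := by rw [div_le_iff₀ hT] at hn; linarith
    refine le_antisymm ?_ (hf hab)
    calc f a = f (a + n * T) := (hp.nat_mul n a).symm
      _ ≤ f b := hf hb
  rcases le_total x y with h | h
  exacts [key x y h, (key y x h).symm]

theorem Function.Periodic.hasDerivAt_eq_zero_of_nonpos {f f' : ℝ → ℝ} {T : ℝ}
    (hp : Periodic f T) (hT : 0 < T) (hf : ∀ x, HasDerivAt f (f' x) x) (hf' : f' ≤ 0)
    (x : ℝ) : f' x = 0 := by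
  have hconst : f = fun _ => f 0 :=
    funext fun y => (antitone_of_hasDerivAt_nonpos hf hf').eq_of_periodic hp hT y 0
  have hfx := hf x
  rw [hconst] at hfx
  exact hfx.unique (hasDerivAt_const x _)

theorem StrictAntiOn.sub_mul_neg {f : ℝ → ℝ} {s : Set ℝ} {c x : ℝ} (hf : StrictAntiOn f s)
    (hc : c ∈ s) (hfc : f c = 0) (hx : x ∈ s) (hne : x ≠ c) : (x - c) * f x < 0 := by
  rcases hne.lt_or_gt with h | h
  · exact mul_neg_of_neg_of_pos (sub_neg.2 h) (hfc ▸ hf hx hc h)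
  · exact mul_neg_of_pos_of_neg (sub_pos.2 h) (hfc ▸ hf hc hx h)

noncomputable section

namespace RosenzweigMacArthur

def F (α γ u v : ℝ) : ℝ := α * u * (γ - u) - u * v / (1 + u)

def G (β u v : ℝ) : ℝ := -v + β * u * v / (1 + u)

def preyNullcline (α γ u : ℝ) : ℝ := α * (γ - u) * (1 + u)

def uStar (β : ℝ) : ℝ := 1 / (β - 1)

def exponent (α β : ℝ) : ℝ := 2 * α / (β - 1) ^ 2

def volterra (β u : ℝ) : ℝ := (β - 1) * u - log u

def rateFactor (α β γ u : ℝ) : ℝ :=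
  exponent α β * (volterra β u - volterra β (uStar β)) +
    (preyNullcline α γ u - preyNullcline α γ (uStar β))

def lyapunov (α β γ u v : ℝ) : ℝ :=
  v ^ exponent α β * ((exponent α β + 1) * (volterra β u - volterra β (uStar β)) + v -
    (exponent α β + 1) / exponent α β * preyNullcline α γ (uStar β))

def lyapunovRate (α β γ u v : ℝ) : ℝ :=
  (exponent α β + 1) * (β - 1) * v ^ exponent α β * ((u - uStar β) * rateFactor α β γ u) /
    (1 + u)

section

variable {α β γ : ℝ}

theorem F_eq_zero_iff {u v : ℝ} (hu : 0 < u) : F α γ u v = 0 ↔ v = preyNullcline α γ u := by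
  have h1u : 1 + u ≠ 0 := by positivity
  unfold F preyNullcline
  constructor <;> intro h
  · field_simp at h
    nlinarith
  · rw [h]
    field_simp
    ring

theorem exponent_pos (hα : 0 < α) (hβ : 1 < β) : 0 < exponent α β := by
  have : 0 < β - 1 := sub_pos.2 hβ
  unfold exponent
  positivity

theorem hasDerivAt_volterra {u : ℝ} (hu : 0 < u) :
    HasDerivAt (volterra β) ((β - 1) - 1 / u) u :=
  (((hasDerivAt_id' u).const_mul (β - 1)).sub (hasDerivAt_log hu.ne')).congr_deriv (by ring)

theorem hasDerivAt_rateFactor {u : ℝ} (hu : 0 < u) :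
    HasDerivAt (rateFactor α β γ)
      (exponent α β * ((β - 1) - 1 / u) + α * (γ - 1 - 2 * u)) u := by
  have hnull : HasDerivAt (preyNullcline α γ) (α * (γ - 1 - 2 * u)) u :=
    ((((hasDerivAt_id' u).const_sub γ).const_mul α).mul
      ((hasDerivAt_id' u).const_add 1)).congr_deriv (by ring)
  exact (((hasDerivAt_volterra hu).sub_const _).const_mul _).add (hnull.sub_const _)

theorem rateFactor_deriv_neg (hα : 0 < α) (hβ : 1 < β) (hγβ : γ * (β - 1) < β + 1) {u : ℝ}
    (hu : 0 < u) : exponent α β * ((β - 1) - 1 / u) + α * (γ - 1 - 2 * u) < 0 := by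
  have hb : 0 < β - 1 := sub_pos.2 hβ
  -- `θ = 2α/b²` is exactly what turns the numerator into minus a square plus a multiple of
  -- `γ b - (β + 1)`.
  have hform : exponent α β * ((β - 1) - 1 / u) + α * (γ - 1 - 2 * u) =
      α / ((β - 1) ^ 2 * u) * (-2 * ((β - 1) * u - 1) ^ 2 +
        (β - 1) * u * (γ * (β - 1) - (β + 1))) := by
    unfold exponent
    field_simp
    ring
  rw [hform]
  refine mul_neg_of_pos_of_neg (by positivity) ?_
  nlinarith [sq_nonneg ((β - 1) * u - 1), mul_pos hb hu]

theorem rateFactor_strictAntiOn (hα : 0 < α) (hβ : 1 < β) (hγβ : γ * (β - 1) < β + 1) :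
    StrictAntiOn (rateFactor α β γ) (Ioi 0) :=
  strictAntiOn_of_hasDerivWithinAt_neg (convex_Ioi 0)
    (fun _ hu => (hasDerivAt_rateFactor hu).continuousAt.continuousWithinAt)
    (fun _ hu => (hasDerivAt_rateFactor (interior_subset hu)).hasDerivWithinAt)
    (fun _ hu => rateFactor_deriv_neg hα hβ hγβ (interior_subset hu))

theorem rateFactor_uStar : rateFactor α β γ (uStar β) = 0 := by
  simp [rateFactor]

theorem lyapunovRate_neg (hα : 0 < α) (hβ : 1 < β) (hγβ : γ * (β - 1) < β + 1) {u v : ℝ}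
    (hu : 0 < u) (hv : 0 < v) (hne : u ≠ uStar β) : lyapunovRate α β γ u v < 0 := by
  have hb : 0 < β - 1 := sub_pos.2 hβ
  have hθ := exponent_pos hα hβ
  have hvθ := rpow_pos_of_pos hv (exponent α β)
  have hsign := (rateFactor_strictAntiOn hα hβ hγβ).sub_mul_neg
    (show uStar β ∈ Ioi 0 from one_div_pos.2 hb) rateFactor_uStar hu hne
  exact div_neg_of_neg_of_pos (mul_neg_of_pos_of_neg (by positivity) hsign) (by positivity)

theorem lyapunovRate_nonpos (hα : 0 < α) (hβ : 1 < β) (hγβ : γ * (β - 1) < β + 1) {u v : ℝ}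
    (hu : 0 < u) (hv : 0 < v) : lyapunovRate α β γ u v ≤ 0 := by
  rcases eq_or_ne u (uStar β) with rfl | hne
  · simp [lyapunovRate]
  · exact (lyapunovRate_neg hα hβ hγβ hu hv hne).le

theorem hasDerivAt_lyapunov_comp (hα : α ≠ 0) (hβ : β ≠ 1) {U V : ℝ → ℝ} {t : ℝ}
    (hU : HasDerivAt U (F α γ (U t) (V t)) t) (hV : HasDerivAt V (G β (U t) (V t)) t)
    (hu : 0 < U t) (hv : 0 < V t) :
    HasDerivAt (fun s => lyapunov α β γ (U s) (V s)) (lyapunovRate α β γ (U t) (V t)) t := by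
  have hb : β - 1 ≠ 0 := sub_ne_zero.2 hβ
  have hθ : exponent α β ≠ 0 := by unfold exponent; positivity
  have h1u : 1 + U t ≠ 0 := by positivity
  have hpow := hV.rpow_const (p := exponent α β) (Or.inl hv.ne')
  have hbracket := ((((hasDerivAt_volterra (β := β) hu).comp t hU).sub_const
    (volterra β (uStar β))).const_mul (exponent α β + 1)).add hV |>.sub_const
    ((exponent α β + 1) / exponent α β * preyNullcline α γ (uStar β))
  refine (hpow.mul hbracket).congr_deriv ?_
  simp only [lyapunovRate, rateFactor, F, G, preyNullcline, volterra, uStar, Pi.add_apply,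
    comp_apply, rpow_sub_one hv.ne']
  field_simp
  ring

end

end RosenzweigMacArthur

end

open RosenzweigMacArthur in
theorem no_periodic_orbit_general (α β γ : ℝ)
    (hα : 0 < α) (hβ : 1 < β) (h2 : γ * (β - 1) < β + 1) :
    ¬ ∃ (U V : ℝ → ℝ) (T : ℝ), 0 < T ∧
      (∀ t : ℝ, HasDerivAt U (α * U t * (γ - U t) - U t * V t / (1 + U t)) t ∧
        HasDerivAt V (-(V t) + β * U t * V t / (1 + U t)) t) ∧
      (∀ t : ℝ, 0 < U t ∧ 0 < V t) ∧
      (∀ t : ℝ, U (t + T) = U t ∧ V (t + T) = V t) ∧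
      (∃ t₁ t₂ : ℝ, (U t₁, V t₁) ≠ (U t₂, V t₂)) := by
  rintro ⟨U, V, T, hT, hode, hpos, hper, t₁, t₂, hne⟩
  have hL : Periodic (fun t => lyapunov α β γ (U t) (V t)) T := fun t => by
    simp only [(hper t).1, (hper t).2]
  have hrate : ∀ t, lyapunovRate α β γ (U t) (V t) = 0 :=
    hL.hasDerivAt_eq_zero_of_nonpos hT
      (fun t => hasDerivAt_lyapunov_comp hα.ne' hβ.ne' (hode t).1 (hode t).2 (hpos t).1 (hpos t).2)
      (fun t => lyapunovRate_nonpos hα hβ h2 (hpos t).1 (hpos t).2)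
  have hU : ∀ t, U t = uStar β := fun t => by
    by_contra h
    exact (lyapunovRate_neg hα hβ h2 (hpos t).1 (hpos t).2 h).ne (hrate t)
  have hV : ∀ t, V t = preyNullcline α γ (uStar β) := fun t => by
    have hU' : HasDerivAt U 0 t :=
      (hasDerivAt_const t (uStar β)).congr_of_eventuallyEq (Filter.Eventually.of_forall hU)
    rw [← hU t]
    exact (F_eq_zero_iff (hpos t).1).1 ((hode t).1.unique hU')
  exact hne (by rw [hU, hU, hV, hV])

/-- Rosenzweig–MacArthur kinetic system: if `1 < γ(β-1) < β+1`, the system admits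
no nonconstant periodic solution with positive components. -/
theorem no_periodic_orbit (α β γ : ℝ)
    (hα : 0 < α) (hβ : 1 < β) (hγ : 0 < γ)
    (h1 : 1 < γ * (β - 1)) (h2 : γ * (β - 1) < β + 1) :
    ¬ ∃ (U V : ℝ → ℝ) (T : ℝ), 0 < T ∧
      (∀ t : ℝ, HasDerivAt U (α * U t * (γ - U t) - U t * V t / (1 + U t)) t ∧
        HasDerivAt V (-(V t) + β * U t * V t / (1 + U t)) t) ∧
      (∀ t : ℝ, 0 < U t ∧ 0 < V t) ∧
      (∀ t : ℝ, U (t + T) = U t ∧ V (t + T) = V t) ∧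
      (∃ t₁ t₂ : ℝ, (U t₁, V t₁) ≠ (U t₂, V t₂)) :=
  no_periodic_orbit_general α β γ hα hβ h2
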